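/- Let (X,Σ,μ) be a σ-finite measure space and let (ℰ,ℱ) be a Dirichlet form on L²(X,μ): ℱ is a dense linear subspace of L²(X,μ), ℰ : ℱ×ℱ → ℝ is a symmetric bilinear map with ℰ(u,u) ≥ 0, ℱ is complete under the inner product ℰ₁(u,v) := ℰ(u,v) + ⟨u,v⟩_{L²}, and for every u ∈ ℱ and every normal contraction T : ℝ → ℝ (T(0)=0 and T is 1-Lipschitz) the L²-class of T composed with a representative of u belongs to ℱ and satisfies ℰ(T∘u, T∘u) ≤ ℰ(u,u). Let ℬ := {f : X → ℝ : f bounded and Σ-measurable, whose μ-class belongs to ℱ}, and for f, g ∈ ℬ set ℰ(f,g) := ℰ([f],[g]). Then (ℰ,ℬ) is sup-norm-closable: for every sequence (f_n) ⊂ ℬ with ℰ(f_n−f_m, f_n−f_m) → 0 as n,m → ∞ and sup_{x∈X}|f_n(x)| → 0, one has ℰ(f_n,f_n) → 0. -/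

import Mathlib

/-!
The `1`-resolvent `G₁` is the adjoint of the inclusion of the Hilbert space `(ℱ, ℰ₁)` into `L²`,
so its range is `ℰ₁`-dense and `⟪G₁ g, h⟫ = ⟪g, G₁ h⟫`. Since `G₁ g` is the unique minimiser of
`w ↦ ℰ(w, w) + ‖w - g‖²` over `ℱ`, and truncating at level `c` decreases both terms when
`|g| ≤ c`, the contraction property makes `G₁` sub-Markovian: `|g| ≤ c` implies `|G₁ g| ≤ c`.
Hence for integrable `g` and `u ∈ ℱ` with `|u| ≤ c`,
`ℰ(G₁ g, u) = ⟪g, u⟫ - ⟪g, G₁ u⟫` is at most `2 ‖g‖₁ c`. By density, `ℰ(v, u_n) → 0` for every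
`v ∈ ℱ` along an `ℰ`-bounded sequence with `sup |u_n| → 0`. For an `ℰ`-Cauchy sequence this
forces `ℰ(u_n, u_n) → 0`, as `ℰ(u_n, u_n) ≤ ℰ(u_n - u_N, u_n - u_N) + 2 ℰ(u_N, u_n)`.
-/

open Filter Topology MeasureTheory

/-- A normal contraction: `T 0 = 0` and `T` is 1-Lipschitz. -/
def NormalContraction (T : ℝ → ℝ) : Prop :=
  T 0 = 0 ∧ ∀ x y : ℝ, |T x - T y| ≤ |x - y|

lemma tendsto_zero_of_forall_eventually_abs_le {ι : Type*} {l : Filter ι} {a : ι → ℝ}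
    (h : ∀ η > 0, ∃ b : ι → ℝ, Tendsto b l (𝓝 0) ∧ ∀ᶠ i in l, |a i| ≤ η + b i) :
    Tendsto a l (𝓝 0) := by
  refine Metric.tendsto_nhds.2 fun ε hε => ?_
  obtain ⟨b, hb, hab⟩ := h (ε / 2) (half_pos hε)
  filter_upwards [hab, hb.eventually (gt_mem_nhds (half_pos hε))] with i hai hbi
  rw [Real.dist_0_eq_abs]
  linarith

namespace LinearMap.BilinForm

variable {M : Type*} [AddCommGroup M] [Module ℝ M] {B : LinearMap.BilinForm ℝ M}

lemma IsSymm.apply_self_eq (hB : B.IsSymm) (a b : M) :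
    B a a = B (a - b) (a - b) + 2 * B b a - B b b := by
  simp only [map_sub, LinearMap.sub_apply, hB.eq a b]
  ring

lemma IsSymm.eventually_apply_self_le (hB : B.IsSymm) (hs : ∀ a, 0 ≤ B a a) {x : ℕ → M}
    (hx : ∀ ε : ℝ, 0 < ε → ∃ N, ∀ n ≥ N, ∀ m ≥ N, B (x n - x m) (x n - x m) < ε) :
    ∃ C, ∀ᶠ n in atTop, B (x n) (x n) ≤ C := by
  obtain ⟨N, hN⟩ := hx 1 one_pos
  refine ⟨2 + 2 * B (x N) (x N), eventually_atTop.2 ⟨N, fun n hn => ?_⟩⟩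
  have h2 := hs (x n - (2 : ℝ) • x N)
  have h1 := hN n hn N le_rfl
  simp only [map_sub, map_smul, LinearMap.sub_apply, LinearMap.smul_apply, smul_eq_mul,
    hB.eq (x N) (x n)] at h1 h2
  linarith

lemma IsSymm.tendsto_apply_self_zero (hB : B.IsSymm) (hs : ∀ a, 0 ≤ B a a) {x : ℕ → M}
    (hx : ∀ ε : ℝ, 0 < ε → ∃ N, ∀ n ≥ N, ∀ m ≥ N, B (x n - x m) (x n - x m) < ε)
    (hweak : ∀ N, Tendsto (fun n => B (x N) (x n)) atTop (𝓝 0)) :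
    Tendsto (fun n => B (x n) (x n)) atTop (𝓝 0) := by
  refine tendsto_zero_of_forall_eventually_abs_le fun η hη => ?_
  obtain ⟨N, hN⟩ := hx η hη
  refine ⟨fun n => 2 * B (x N) (x n), by simpa using (hweak N).const_mul 2,
    eventually_atTop.2 ⟨N, fun n hn => ?_⟩⟩
  rw [abs_of_nonneg (hs _), hB.apply_self_eq (x n) (x N)]
  linarith [hN n hn N le_rfl, hs (x N)]

end LinearMap.BilinForm

noncomputable section

variable {X : Type*} [MeasurableSpace X] {μ : Measure X}

lemma abs_inner_le_integral_abs_mul {g h : Lp ℝ 2 μ} (hg : Integrable g μ) {c : ℝ}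
    (hh : ∀ᵐ x ∂μ, |h x| ≤ c) : |inner ℝ g h| ≤ (∫ x, |g x| ∂μ) * c := by
  rw [L2.inner_def, ← integral_mul_const, ← Real.norm_eq_abs]
  refine (norm_integral_le_integral_norm _).trans (integral_mono_of_nonneg
    (.of_forall fun _ => norm_nonneg _) (hg.abs.mul_const c) ?_)
  filter_upwards [hh] with x hx
  simpa [abs_mul, mul_comm] using mul_le_mul_of_nonneg_left hx (abs_nonneg (g x))

lemma dense_setOf_integrable : Dense {g : Lp ℝ 2 μ | Integrable g μ} :=
  (Lp.simpleFunc.dense (E := ℝ) (p := 2) (μ := μ) ENNReal.ofNat_ne_top).mono fun g hg =>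
    ((SimpleFunc.memLp_iff_integrable two_ne_zero ENNReal.ofNat_ne_top).1
      (Lp.simpleFunc.memLp ⟨g, hg⟩)).congr (Lp.simpleFunc.toSimpleFunc_eq_toFun ⟨g, hg⟩)

structure IsClosedForm (ℱ : Submodule ℝ (Lp ℝ 2 μ)) (ℰ : Lp ℝ 2 μ → Lp ℝ 2 μ → ℝ) : Prop where
  symm : ∀ u ∈ ℱ, ∀ v ∈ ℱ, ℰ u v = ℰ v u
  add_left : ∀ u ∈ ℱ, ∀ v ∈ ℱ, ∀ w ∈ ℱ, ℰ (u + v) w = ℰ u w + ℰ v w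
  smul_left : ∀ c : ℝ, ∀ u ∈ ℱ, ∀ v ∈ ℱ, ℰ (c • u) v = c * ℰ u v
  nonneg : ∀ u ∈ ℱ, 0 ≤ ℰ u u
  complete : ∀ u : ℕ → Lp ℝ 2 μ, (∀ n, u n ∈ ℱ) →
    (∀ ε : ℝ, 0 < ε → ∃ N, ∀ n ≥ N, ∀ m ≥ N,
      ℰ (u n - u m) (u n - u m) + ‖u n - u m‖ ^ 2 < ε) →
    ∃ v ∈ ℱ, Tendsto (fun n => ℰ (u n - v) (u n - v) + ‖u n - v‖ ^ 2) atTop (𝓝 0)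

namespace IsClosedForm

variable {ℱ : Submodule ℝ (Lp ℝ 2 μ)} {ℰ : Lp ℝ 2 μ → Lp ℝ 2 μ → ℝ}

lemma add_right (hℰ : IsClosedForm ℱ ℰ) {u v w : Lp ℝ 2 μ} (hu : u ∈ ℱ) (hv : v ∈ ℱ)
    (hw : w ∈ ℱ) : ℰ u (v + w) = ℰ u v + ℰ u w := by
  rw [hℰ.symm u hu _ (add_mem hv hw), hℰ.add_left v hv w hw u hu, hℰ.symm v hv u hu,
    hℰ.symm w hw u hu]

lemma smul_right (hℰ : IsClosedForm ℱ ℰ) (c : ℝ) {u v : Lp ℝ 2 μ} (hu : u ∈ ℱ) (hv : v ∈ ℱ) :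
    ℰ u (c • v) = c * ℰ u v := by
  rw [hℰ.symm u hu _ (ℱ.smul_mem c hv), hℰ.smul_left c v hv u hu, hℰ.symm v hv u hu]

end IsClosedForm

def NormalContractionsOperate (ℱ : Submodule ℝ (Lp ℝ 2 μ)) (ℰ : Lp ℝ 2 μ → Lp ℝ 2 μ → ℝ) :
    Prop :=
  ∀ u : Lp ℝ 2 μ, u ∈ ℱ → ∀ T : ℝ → ℝ, NormalContraction T →
    ∃ w ∈ ℱ, (⇑w : X → ℝ) =ᵐ[μ] (fun x => T (u x)) ∧ ℰ w w ≤ ℰ u u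

/-- `ℱ` with the inner product `ℰ₁(u, v) = ℰ(u, v) + ⟪u, v⟫`; the form `ℰ` is a parameter of the
type so that this inner product is an instance. -/
def EnergySpace (ℱ : Submodule ℝ (Lp ℝ 2 μ)) (_ℰ : Lp ℝ 2 μ → Lp ℝ 2 μ → ℝ) : Type _ := ℱ

namespace EnergySpace

variable {ℱ : Submodule ℝ (Lp ℝ 2 μ)} {ℰ : Lp ℝ 2 μ → Lp ℝ 2 μ → ℝ}

instance : AddCommGroup (EnergySpace ℱ ℰ) := inferInstanceAs (AddCommGroup ℱ)

instance : Module ℝ (EnergySpace ℱ ℰ) := inferInstanceAs (Module ℝ ℱ)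

def toLp : EnergySpace ℱ ℰ →ₗ[ℝ] Lp ℝ 2 μ := ℱ.subtype

def mk (u : Lp ℝ 2 μ) (hu : u ∈ ℱ) : EnergySpace ℱ ℰ := ⟨u, hu⟩

lemma toLp_mk (u : Lp ℝ 2 μ) (hu : u ∈ ℱ) : toLp (mk u hu : EnergySpace ℱ ℰ) = u := rfl

lemma toLp_mem (u : EnergySpace ℱ ℰ) : toLp u ∈ ℱ := (show ℱ from u).2

lemma toLp_injective : Function.Injective (toLp : EnergySpace ℱ ℰ → Lp ℝ 2 μ) :=
  Subtype.val_injective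

variable [hℰ : Fact (IsClosedForm ℱ ℰ)]

def energy : LinearMap.BilinForm ℝ (EnergySpace ℱ ℰ) :=
  LinearMap.mk₂ ℝ (fun u v => ℰ (toLp u) (toLp v))
    (fun u v w => by
      rw [map_add]; exact hℰ.out.add_left _ (toLp_mem u) _ (toLp_mem v) _ (toLp_mem w))
    (fun c u v => by rw [map_smul]; exact hℰ.out.smul_left c _ (toLp_mem u) _ (toLp_mem v))
    (fun u v w => by rw [map_add]; exact hℰ.out.add_right (toLp_mem u) (toLp_mem v) (toLp_mem w))
    (fun c u v => by rw [map_smul]; exact hℰ.out.smul_right c (toLp_mem u) (toLp_mem v))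

lemma energy_apply (u v : EnergySpace ℱ ℰ) : energy u v = ℰ (toLp u) (toLp v) := rfl

lemma energy_isSymm : (energy : LinearMap.BilinForm ℝ (EnergySpace ℱ ℰ)).IsSymm :=
  ⟨fun u v => hℰ.out.symm _ (toLp_mem u) _ (toLp_mem v)⟩

lemma energy_self_nonneg (u : EnergySpace ℱ ℰ) : 0 ≤ energy u u :=
  hℰ.out.nonneg _ (toLp_mem u)

instance : InnerProductSpace.Core ℝ (EnergySpace ℱ ℰ) where
  inner u v := energy u v + inner ℝ (toLp u) (toLp v)
  conj_inner_symm u v := by simp only [conj_trivial]; rw [energy_isSymm.eq, real_inner_comm]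
  re_inner_nonneg u := add_nonneg (energy_self_nonneg u) real_inner_self_nonneg
  add_left u v w := by simp only [map_add, LinearMap.add_apply, inner_add_left]; ring
  smul_left u v c := by
    simp only [map_smul, LinearMap.smul_apply, smul_eq_mul, real_inner_smul_left, conj_trivial]
    ring
  definite u h := by
    have hu : inner ℝ (toLp u) (toLp u) = 0 :=
      le_antisymm (by linarith [energy_self_nonneg u]) real_inner_self_nonneg
    exact toLp_injective (by simpa using hu)

instance : NormedAddCommGroup (EnergySpace ℱ ℰ) :=
  InnerProductSpace.Core.toNormedAddCommGroup (𝕜 := ℝ)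

instance : InnerProductSpace ℝ (EnergySpace ℱ ℰ) := InnerProductSpace.ofCore _

lemma inner_def (u v : EnergySpace ℱ ℰ) :
    inner ℝ u v = energy u v + inner ℝ (toLp u) (toLp v) := rfl

lemma norm_sq (u : EnergySpace ℱ ℰ) : ‖u‖ ^ 2 = energy u u + ‖toLp u‖ ^ 2 := by
  rw [← real_inner_self_eq_norm_sq, inner_def, real_inner_self_eq_norm_sq]

lemma norm_toLp_le (u : EnergySpace ℱ ℰ) : ‖toLp u‖ ≤ ‖u‖ :=
  (pow_le_pow_iff_left₀ (norm_nonneg _) (norm_nonneg _) two_ne_zero).1 <| by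
    rw [norm_sq]; linarith [energy_self_nonneg u]

lemma energy_self_le_norm_sq (u : EnergySpace ℱ ℰ) : energy u u ≤ ‖u‖ ^ 2 := by
  rw [norm_sq]; linarith [sq_nonneg ‖toLp u‖]

lemma norm_sub_sq (u v : EnergySpace ℱ ℰ) :
    ‖u - v‖ ^ 2 = ℰ (toLp u - toLp v) (toLp u - toLp v) + ‖toLp u - toLp v‖ ^ 2 := by
  rw [norm_sq, energy_apply, map_sub]

instance : CompleteSpace (EnergySpace ℱ ℰ) := by
  refine Metric.complete_of_cauchySeq_tendsto fun u hu => ?_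
  have hCauchy : ∀ ε : ℝ, 0 < ε → ∃ N, ∀ n ≥ N, ∀ m ≥ N,
      ℰ (toLp (u n) - toLp (u m)) (toLp (u n) - toLp (u m)) +
        ‖toLp (u n) - toLp (u m)‖ ^ 2 < ε := by
    intro ε hε
    obtain ⟨N, hN⟩ := Metric.cauchySeq_iff.1 hu (√ε) (Real.sqrt_pos.2 hε)
    refine ⟨N, fun n hn m hm => ?_⟩
    rw [← norm_sub_sq, ← Real.lt_sqrt (norm_nonneg _), ← dist_eq_norm]
    exact hN n hn m hm
  obtain ⟨v, hv, hlim⟩ := hℰ.out.complete _ (fun n => toLp_mem (u n)) hCauchy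
  refine ⟨mk v hv, tendsto_iff_norm_sub_tendsto_zero.2 ?_⟩
  have hnorm : ∀ n, ‖u n - mk v hv‖ =
      √(ℰ (toLp (u n) - v) (toLp (u n) - v) + ‖toLp (u n) - v‖ ^ 2) := fun n => by
    rw [← Real.sqrt_sq (norm_nonneg (u n - mk v hv)), norm_sub_sq, toLp_mk]
  simpa only [hnorm, Real.sqrt_zero] using hlim.sqrt

def inclusion : EnergySpace ℱ ℰ →L[ℝ] Lp ℝ 2 μ :=
  toLp.mkContinuous 1 fun u => by simpa using norm_toLp_le u

/-- The `1`-resolvent `G₁`: as the adjoint of `inclusion`, it satisfies `ℰ₁(G₁ g, u) = ⟪g, u⟫`. -/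
def resolvent : Lp ℝ 2 μ →L[ℝ] EnergySpace ℱ ℰ := ContinuousLinearMap.adjoint inclusion

lemma inner_resolvent_left (g : Lp ℝ 2 μ) (u : EnergySpace ℱ ℰ) :
    inner ℝ (resolvent g) u = inner ℝ g (toLp u) :=
  ContinuousLinearMap.adjoint_inner_left _ _ _

lemma denseRange_resolvent : DenseRange (resolvent : Lp ℝ 2 μ → EnergySpace ℱ ℰ) := by
  have hker : (inclusion : EnergySpace ℱ ℰ →L[ℝ] Lp ℝ 2 μ).ker = ⊥ :=
    LinearMap.ker_eq_bot.2 toLp_injective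
  have h : (resolvent : Lp ℝ 2 μ →L[ℝ] EnergySpace ℱ ℰ).rangeᗮ = ⊥ := by
    rw [ContinuousLinearMap.orthogonal_range, resolvent, ContinuousLinearMap.adjoint_adjoint]
    exact hker
  rw [← Submodule.topologicalClosure_eq_top_iff,
    ← Submodule.dense_iff_topologicalClosure_eq_top] at h
  rwa [LinearMap.coe_range, ContinuousLinearMap.coe_coe] at h

lemma inner_toLp_resolvent_comm (g h : Lp ℝ 2 μ) :
    inner ℝ (toLp (resolvent g : EnergySpace ℱ ℰ)) h =
      inner ℝ g (toLp (resolvent h : EnergySpace ℱ ℰ)) := by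
  rw [real_inner_comm, ← inner_resolvent_left, real_inner_comm, inner_resolvent_left]

lemma energy_add_norm_sub_sq (g : Lp ℝ 2 μ) (w : EnergySpace ℱ ℰ) :
    energy w w + ‖toLp w - g‖ ^ 2 =
      energy (resolvent g : EnergySpace ℱ ℰ) (resolvent g) +
        ‖toLp (resolvent g : EnergySpace ℱ ℰ) - g‖ ^ 2 + ‖w - resolvent g‖ ^ 2 := by
  have key : ∀ w : EnergySpace ℱ ℰ,
      energy w w + ‖toLp w - g‖ ^ 2 = ‖w‖ ^ 2 - 2 * inner ℝ (resolvent g) w + ‖g‖ ^ 2 := by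
    intro w
    rw [norm_sub_sq_real, norm_sq, inner_resolvent_left, real_inner_comm]
    ring
  rw [key, key, norm_sub_sq_real, real_inner_self_eq_norm_sq, real_inner_comm]
  ring

lemma ae_abs_toLp_resolvent_le (hcontr : NormalContractionsOperate ℱ ℰ) {g : Lp ℝ 2 μ} {c : ℝ}
    (hc : 0 ≤ c) (hg : ∀ᵐ x ∂μ, |g x| ≤ c) :
    ∀ᵐ x ∂μ, |toLp (resolvent g : EnergySpace ℱ ℰ) x| ≤ c := by
  set v : EnergySpace ℱ ℰ := resolvent g
  have hc' : -c ≤ c := by linarith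
  set T : ℝ → ℝ := fun t => Set.projIcc (-c) c hc' t
  have hT : NormalContraction T :=
    ⟨by simp [T, Set.projIcc_of_mem hc' ⟨neg_nonpos.2 hc, hc⟩],
      fun _ _ => Set.abs_projIcc_sub_projIcc hc'⟩
  obtain ⟨w, hw, hwT, hwE⟩ := hcontr (toLp v) (toLp_mem v) T hT
  -- `T` fixes the values of `g`, so truncating `v` brings it closer to `g`
  have hcloser : ‖w - g‖ ≤ ‖toLp v - g‖ := by
    refine Lp.norm_le_norm_of_ae_le ?_
    filter_upwards [hwT, hg, Lp.coeFn_sub w g, Lp.coeFn_sub (toLp v) g] with x hwx hgx hwg hvg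
    have hTg : T (g x) = g x := by simp [T, Set.projIcc_of_mem hc' (abs_le.1 hgx)]
    rw [hwg, hvg, Pi.sub_apply, Pi.sub_apply, hwx, Real.norm_eq_abs, Real.norm_eq_abs]
    calc |T (toLp v x) - g x| = |T (toLp v x) - T (g x)| := by rw [hTg]
      _ ≤ |toLp v x - g x| := hT.2 _ _
  have hwv : (mk w hw : EnergySpace ℱ ℰ) = v := by
    have hmin := energy_add_norm_sub_sq g (mk w hw : EnergySpace ℱ ℰ)
    simp only [energy_apply, toLp_mk] at hmin
    have hsq : ‖w - g‖ ^ 2 ≤ ‖toLp v - g‖ ^ 2 := pow_le_pow_left₀ (norm_nonneg _) hcloser 2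
    have h0 : ‖(mk w hw : EnergySpace ℱ ℰ) - v‖ ^ 2 ≤ 0 := by linarith
    simpa [sub_eq_zero] using le_antisymm h0 (sq_nonneg _)
  filter_upwards [hwT] with x hx
  rw [← hwv, toLp_mk, hx, abs_le]
  exact (Set.projIcc (-c) c hc' _).2

lemma abs_energy_resolvent_le (hcontr : NormalContractionsOperate ℱ ℰ) {g : Lp ℝ 2 μ}
    (hg : Integrable g μ) {w : EnergySpace ℱ ℰ} {c : ℝ} (hc : 0 ≤ c)
    (hw : ∀ᵐ x ∂μ, |toLp w x| ≤ c) :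
    |energy (resolvent g) w| ≤ 2 * (∫ x, |g x| ∂μ) * c := by
  have hres : energy (resolvent g) w =
      inner ℝ g (toLp w) - inner ℝ g (toLp (resolvent (toLp w) : EnergySpace ℱ ℰ)) := by
    rw [← inner_toLp_resolvent_comm, ← inner_resolvent_left, inner_def]
    ring
  rw [hres]
  linarith [abs_sub (inner ℝ g (toLp w)) (inner ℝ g (toLp (resolvent (toLp w) : EnergySpace ℱ ℰ))),
    abs_inner_le_integral_abs_mul hg hw,
    abs_inner_le_integral_abs_mul hg (ae_abs_toLp_resolvent_le (ℰ := ℰ) hcontr hc hw)]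

lemma tendsto_energy_of_ae_abs_le (hcontr : NormalContractionsOperate ℱ ℰ) (v : EnergySpace ℱ ℰ)
    {w : ℕ → EnergySpace ℱ ℰ} {C : ℝ} (hC : ∀ᶠ n in atTop, energy (w n) (w n) ≤ C)
    {c : ℕ → ℝ} (hc0 : ∀ n, 0 ≤ c n) (hc : Tendsto c atTop (𝓝 0))
    (hwc : ∀ n, ∀ᵐ x ∂μ, |toLp (w n) x| ≤ c n) :
    Tendsto (fun n => energy v (w n)) atTop (𝓝 0) := by
  refine tendsto_zero_of_forall_eventually_abs_le fun η hη => ?_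
  set C₁ := max C 1
  have hC₁ : 0 < √C₁ := Real.sqrt_pos.2 (lt_max_of_lt_right one_pos)
  -- resolvents of integrable functions are `ℰ₁`-dense
  obtain ⟨_, ⟨g, hg, rfl⟩, hvg⟩ :=
    (denseRange_resolvent.dense_image resolvent.continuous dense_setOf_integrable).exists_dist_lt
      v (div_pos hη hC₁)
  set K := ∫ x, |g x| ∂μ
  refine ⟨fun n => 2 * K * c n, by simpa using hc.const_mul (2 * K), ?_⟩
  filter_upwards [hC] with n hn
  have happrox : |energy (v - resolvent g) (w n)| ≤ η := by
    have hsq : energy (v - resolvent g) (w n) ^ 2 ≤ ‖v - resolvent g‖ ^ 2 * C₁ :=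
      (energy.apply_sq_le_of_symm energy_self_nonneg
        (LinearMap.BilinForm.isSymm_iff.1 energy_isSymm) _ _).trans <|
        mul_le_mul (energy_self_le_norm_sq _) (hn.trans (le_max_left _ _))
          (energy_self_nonneg _) (sq_nonneg _)
    refine (Real.abs_le_sqrt hsq).trans ?_
    rw [Real.sqrt_mul (sq_nonneg _), Real.sqrt_sq (norm_nonneg _), ← le_div_iff₀ hC₁,
      ← dist_eq_norm]
    exact hvg.le
  calc |energy v (w n)| = |energy (v - resolvent g) (w n) + energy (resolvent g) (w n)| := by
        rw [map_sub, LinearMap.sub_apply, sub_add_cancel]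
    _ ≤ η + 2 * K * c n := (abs_add_le _ _).trans
        (add_le_add happrox (abs_energy_resolvent_le hcontr hg (hc0 n) (hwc n)))

end EnergySpace

end

open EnergySpace in
theorem statement_14_general {X : Type*} [MeasurableSpace X] (μ : Measure X)
    (ℱ : Submodule ℝ (Lp ℝ 2 μ))
    (ℰ : Lp ℝ 2 μ → Lp ℝ 2 μ → ℝ)
    (hsym : ∀ u ∈ ℱ, ∀ v ∈ ℱ, ℰ u v = ℰ v u)
    (hlin_add : ∀ u ∈ ℱ, ∀ v ∈ ℱ, ∀ w ∈ ℱ, ℰ (u + v) w = ℰ u w + ℰ v w)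
    (hlin_smul : ∀ c : ℝ, ∀ u ∈ ℱ, ∀ v ∈ ℱ, ℰ (c • u) v = c * ℰ u v)
    (hnonneg : ∀ u ∈ ℱ, 0 ≤ ℰ u u)
    -- `ℱ` is complete under the inner product `ℰ₁(u,v) = ℰ(u,v) + ⟨u,v⟩_{L²}`
    (hcomplete : ∀ u : ℕ → Lp ℝ 2 μ, (∀ n, u n ∈ ℱ) →
      (∀ ε : ℝ, 0 < ε → ∃ N, ∀ n ≥ N, ∀ m ≥ N,
        ℰ (u n - u m) (u n - u m) + ‖u n - u m‖ ^ 2 < ε) →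
      ∃ v ∈ ℱ, Tendsto (fun n => ℰ (u n - v) (u n - v) + ‖u n - v‖ ^ 2) atTop (𝓝 0))
    -- normal contractions operate on `(ℰ,ℱ)`
    (hcontr : ∀ u : Lp ℝ 2 μ, u ∈ ℱ → ∀ T : ℝ → ℝ, NormalContraction T →
      ∃ w ∈ ℱ, (⇑w : X → ℝ) =ᵐ[μ] (fun x => T (u x)) ∧ ℰ w w ≤ ℰ u u) :
    ∀ (f : ℕ → X → ℝ) (u : ℕ → Lp ℝ 2 μ),
      (∀ n, Measurable (f n)) → (∀ n, ∃ C : ℝ, ∀ x, |f n x| ≤ C) →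
      (∀ n, u n ∈ ℱ) → (∀ n, (⇑(u n) : X → ℝ) =ᵐ[μ] f n) →
      (∀ ε : ℝ, 0 < ε → ∃ N, ∀ n ≥ N, ∀ m ≥ N, ℰ (u n - u m) (u n - u m) < ε) →
      Tendsto (fun n => ⨆ x, |f n x|) atTop (𝓝 0) →
      Tendsto (fun n => ℰ (u n) (u n)) atTop (𝓝 0) := by
  intro f u _ hbdd huF hae hCauchy hsup
  have : Fact (IsClosedForm ℱ ℰ) := ⟨⟨hsym, hlin_add, hlin_smul, hnonneg, hcomplete⟩⟩
  set x : ℕ → EnergySpace ℱ ℰ := fun n => mk (u n) (huF n)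
  have hx_le_sup : ∀ n, ∀ᵐ y ∂μ, |toLp (x n) y| ≤ ⨆ y, |f n y| := fun n => by
    obtain ⟨C, hC⟩ := hbdd n
    filter_upwards [hae n] with y hy
    rw [toLp_mk, hy]
    exact le_ciSup ⟨C, Set.forall_mem_range.2 hC⟩ y
  have hxCauchy : ∀ ε : ℝ, 0 < ε → ∃ N, ∀ n ≥ N, ∀ m ≥ N,
      energy (x n - x m) (x n - x m) < ε := hCauchy
  obtain ⟨C, hC⟩ := energy_isSymm.eventually_apply_self_le energy_self_nonneg hxCauchy
  exact energy_isSymm.tendsto_apply_self_zero energy_self_nonneg hxCauchy fun N =>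
    tendsto_energy_of_ae_abs_le hcontr (x N) hC (fun n => Real.iSup_nonneg fun _ => abs_nonneg _)
      hsup hx_le_sup

/-- Theorem: a Dirichlet form `(ℰ,ℱ)` on `L²(X,μ)` (with `μ` σ-finite) induces on
`ℬ = {bounded measurable f whose μ-class lies in ℱ}` a sup-norm-closable bilinear form:
if `(f_n) ⊂ ℬ` (with classes `u_n ∈ ℱ`) is `ℰ`-Cauchy and `‖f_n‖_sup → 0`, then
`ℰ(f_n,f_n) → 0`. -/
theorem statement_14 {X : Type*} [MeasurableSpace X] (μ : Measure X) [SigmaFinite μ]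
    (ℱ : Submodule ℝ (Lp ℝ 2 μ))
    (hdense : Dense (ℱ : Set (Lp ℝ 2 μ)))
    (ℰ : Lp ℝ 2 μ → Lp ℝ 2 μ → ℝ)
    (hsym : ∀ u ∈ ℱ, ∀ v ∈ ℱ, ℰ u v = ℰ v u)
    (hlin_add : ∀ u ∈ ℱ, ∀ v ∈ ℱ, ∀ w ∈ ℱ, ℰ (u + v) w = ℰ u w + ℰ v w)
    (hlin_smul : ∀ c : ℝ, ∀ u ∈ ℱ, ∀ v ∈ ℱ, ℰ (c • u) v = c * ℰ u v)
    (hnonneg : ∀ u ∈ ℱ, 0 ≤ ℰ u u)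
    -- `ℱ` is complete under the inner product `ℰ₁(u,v) = ℰ(u,v) + ⟨u,v⟩_{L²}`
    (hcomplete : ∀ u : ℕ → Lp ℝ 2 μ, (∀ n, u n ∈ ℱ) →
      (∀ ε : ℝ, 0 < ε → ∃ N, ∀ n ≥ N, ∀ m ≥ N,
        ℰ (u n - u m) (u n - u m) + ‖u n - u m‖ ^ 2 < ε) →
      ∃ v ∈ ℱ, Tendsto (fun n => ℰ (u n - v) (u n - v) + ‖u n - v‖ ^ 2) atTop (𝓝 0))
    -- normal contractions operate on `(ℰ,ℱ)`
    (hcontr : ∀ u : Lp ℝ 2 μ, u ∈ ℱ → ∀ T : ℝ → ℝ, NormalContraction T →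
      ∃ w ∈ ℱ, (⇑w : X → ℝ) =ᵐ[μ] (fun x => T (u x)) ∧ ℰ w w ≤ ℰ u u) :
    ∀ (f : ℕ → X → ℝ) (u : ℕ → Lp ℝ 2 μ),
      (∀ n, Measurable (f n)) → (∀ n, ∃ C : ℝ, ∀ x, |f n x| ≤ C) →
      (∀ n, u n ∈ ℱ) → (∀ n, (⇑(u n) : X → ℝ) =ᵐ[μ] f n) →
      (∀ ε : ℝ, 0 < ε → ∃ N, ∀ n ≥ N, ∀ m ≥ N, ℰ (u n - u m) (u n - u m) < ε) →
      Tendsto (fun n => ⨆ x, |f n x|) atTop (𝓝 0) →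
      Tendsto (fun n => ℰ (u n) (u n)) atTop (𝓝 0) :=
  statement_14_general μ ℱ ℰ hsym hlin_add hlin_smul hnonneg hcomplete hcontr
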